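/- arXiv:1911.00468 — 5 statements merged into one kernel-verified Lean document; each statement's English description precedes it below -/
import Mathlib

section
/- Let κ : S² × S² → ℝ be measurable with κ(Ω,Ω') = κ(Ω',Ω) for all Ω, Ω' ∈ S², κ(Ω,Ω') ≥ κ₀ for a constant κ₀ > 0, and ∫_{S²} κ(Ω,Ω') dσ(Ω') = 1 for every Ω ∈ S². Then for every bounded measurable a : S² → ℝ with ∫_{S²} a dσ = 0 one has ∫_{S²}∫_{S²} κ(Ω,Ω') a(Ω) a(Ω') dσ(Ω') dσ(Ω) ≤ (1 − 4π κ₀) ∫_{S²} a² dσ. -/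
open MeasureTheory Metric
open scoped RealInnerProductSpace Real Matrix

noncomputable section

/-- Euclidean space `ℝ³`. -/
abbrev E3 : Type := EuclideanSpace ℝ (Fin 3)

/-- The unit sphere `S² ⊆ ℝ³`. -/
abbrev S2 : Type := Metric.sphere (0 : E3) 1

/-- The rotation-invariant surface measure `σ` on `S²` (total mass `4π`). -/
noncomputable def σS : Measure S2 := (volume : Measure E3).toSphere

/-! Subtracting `κ₀` leaves a nonnegative symmetric kernel with row integrals `1 - 4πκ₀`, and
does not change the bilinear form on mean-zero functions. For a nonnegative symmetric kernel
with constant row integrals `c`, the Schur test `k a(x) a(y) ≤ k (a(x)² + a(y)²) / 2`, integrated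
and symmetrized, bounds the bilinear form by `c ∫ a²`. -/

section SchurTest

variable {α : Type*} [MeasurableSpace α] {μ : Measure α} [IsFiniteMeasure μ]
  {k : α → α → ℝ} {a : α → ℝ} {C c : ℝ}

lemma integrable_uncurry_of_integral_eq (hk : Measurable (Function.uncurry k))
    (hk0 : ∀ x y, 0 ≤ k x y) (hint : ∀ x, Integrable (k x) μ) (hrow : ∀ x, ∫ y, k x y ∂μ = c) :
    Integrable (Function.uncurry k) (μ.prod μ) := by
  refine (integrable_prod_iff hk.aestronglyMeasurable).2 ⟨ae_of_all _ hint, ?_⟩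
  simp only [Function.uncurry_apply_pair, Real.norm_of_nonneg (hk0 _ _), hrow]
  exact integrable_const c

lemma integral_sub_const_mul_mul_of_integral_eq_zero (x : α) (d : ℝ) (hint : Integrable (k x) μ)
    (ha : Measurable a) (hC : ∀ y, |a y| ≤ C) (hmean : ∫ y, a y ∂μ = 0) :
    ∫ y, (k x y - d) * a x * a y ∂μ = ∫ y, k x y * a x * a y ∂μ := by
  have hka : Integrable (fun y => k x y * a x * a y) μ :=
    (hint.mul_const (a x)).mul_bdd ha.aestronglyMeasurable (ae_of_all _ hC)
  have hda : Integrable (fun y => d * a x * a y) μ :=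
    (Integrable.of_bound ha.aestronglyMeasurable C (ae_of_all _ hC)).const_mul (d * a x)
  simp_rw [sub_mul]
  rw [integral_sub hka hda, integral_const_mul, hmean, mul_zero, sub_zero]

theorem integral_integral_mul_le_of_symm (hk : Measurable (Function.uncurry k))
    (hk0 : ∀ x y, 0 ≤ k x y) (hsymm : ∀ x y, k x y = k y x) (hint : ∀ x, Integrable (k x) μ)
    (hrow : ∀ x, ∫ y, k x y ∂μ = c) (ha : Measurable a) (hC : ∀ x, |a x| ≤ C) :
    ∫ x, ∫ y, k x y * a x * a y ∂μ ∂μ ≤ c * ∫ x, a x ^ 2 ∂μ := by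
  have hK := integrable_uncurry_of_integral_eq hk hk0 hint hrow
  set F : α × α → ℝ := fun p => k p.1 p.2 * a p.1 ^ 2
  have hF : Integrable F (μ.prod μ) :=
    hK.mul_bdd ((ha.comp measurable_fst).pow_const 2).aestronglyMeasurable
      (ae_of_all _ fun p => by simpa using pow_le_pow_left₀ (abs_nonneg _) (hC p.1) 2)
  have hF_swap_int : Integrable (fun p => F p.swap) (μ.prod μ) := hF.swap
  have hG : Integrable (fun p : α × α => k p.1 p.2 * a p.1 * a p.2) (μ.prod μ) :=
    (hK.mul_bdd (ha.comp measurable_fst).aestronglyMeasurable (ae_of_all _ fun p => hC p.1))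
      |>.mul_bdd (ha.comp measurable_snd).aestronglyMeasurable (ae_of_all _ fun p => hC p.2)
  have hF_eq : ∫ p, F p ∂μ.prod μ = c * ∫ x, a x ^ 2 ∂μ := by
    simp_rw [integral_prod F hF, F, integral_mul_const, hrow, integral_const_mul]
  have hF_swap : ∫ p, F p.swap ∂μ.prod μ = ∫ p, F p ∂μ.prod μ := integral_prod_swap F
  calc ∫ x, ∫ y, k x y * a x * a y ∂μ ∂μ = ∫ p, k p.1 p.2 * a p.1 * a p.2 ∂μ.prod μ :=
        (integral_prod _ hG).symm
    _ ≤ ∫ p, (F p + F p.swap) / 2 ∂μ.prod μ := by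
        refine integral_mono hG ((hF.add hF_swap_int).div_const 2) fun p => ?_
        simp only [F, Prod.fst_swap, Prod.snd_swap, hsymm p.2 p.1]
        nlinarith [mul_nonneg (hk0 p.1 p.2) (sq_nonneg (a p.1 - a p.2))]
    _ = c * ∫ x, a x ^ 2 ∂μ := by
        rw [integral_div, integral_add hF hF_swap_int, hF_swap, hF_eq]
        ring

end SchurTest

instance : IsFiniteMeasure σS := by
  unfold σS; infer_instance

lemma measureReal_σS_univ : σS.real Set.univ = 4 * π := by
  rw [σS, Measure.toSphere_real_apply_univ, finrank_euclideanSpace_fin, measureReal_def,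
    EuclideanSpace.volume_ball_fin_three, ENNReal.ofReal_one, one_pow, one_mul,
    ENNReal.toReal_ofReal (by positivity)]
  push_cast
  ring

theorem kernel_bilinear_bound_general
    (κ : S2 → S2 → ℝ) (κ₀ : ℝ) (hκmeas : Measurable (Function.uncurry κ))
    (hκsym : ∀ Ω Ω' : S2, κ Ω Ω' = κ Ω' Ω)
    (hκlb : ∀ Ω Ω' : S2, κ₀ ≤ κ Ω Ω')
    (hκnorm : ∀ Ω : S2, ∫ Ω', κ Ω Ω' ∂σS = 1)
    (a : S2 → ℝ) (hameas : Measurable a) (habd : ∃ C : ℝ, ∀ x : S2, |a x| ≤ C)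
    (hamean : ∫ Ω, a Ω ∂σS = 0) :
    ∫ Ω, (∫ Ω', κ Ω Ω' * a Ω * a Ω' ∂σS) ∂σS ≤ (1 - 4 * π * κ₀) * ∫ Ω, (a Ω) ^ 2 ∂σS := by
  obtain ⟨C, hC⟩ := habd
  have hint (Ω : S2) : Integrable (κ Ω) σS :=
    Integrable.of_integral_ne_zero (by rw [hκnorm]; exact one_ne_zero)
  have hint_sub (Ω : S2) : Integrable (fun Ω' => κ Ω Ω' - κ₀) σS :=
    (hint Ω).sub (integrable_const κ₀)
  have hrow (Ω : S2) : ∫ Ω', κ Ω Ω' - κ₀ ∂σS = 1 - 4 * π * κ₀ := by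
    rw [integral_sub (hint Ω) (integrable_const κ₀), hκnorm, integral_const, measureReal_σS_univ,
      smul_eq_mul, mul_comm]
  calc ∫ Ω, ∫ Ω', κ Ω Ω' * a Ω * a Ω' ∂σS ∂σS
        = ∫ Ω, ∫ Ω', (κ Ω Ω' - κ₀) * a Ω * a Ω' ∂σS ∂σS :=
        integral_congr_ae <| ae_of_all _ fun Ω =>
          (integral_sub_const_mul_mul_of_integral_eq_zero Ω κ₀ (hint Ω) hameas hC hamean).symm
    _ ≤ (1 - 4 * π * κ₀) * ∫ Ω, (a Ω) ^ 2 ∂σS :=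
        integral_integral_mul_le_of_symm (hκmeas.sub measurable_const)
          (fun Ω Ω' => sub_nonneg.2 (hκlb Ω Ω')) (fun Ω Ω' => by rw [hκsym]) hint_sub hrow
          hameas hC

/-- For a symmetric scattering kernel `κ ≥ κ₀ > 0` on `S²` with `∫ κ(Ω,·) dσ = 1`, and any
bounded measurable `a : S² → ℝ` with zero mean:
`∬ κ(Ω,Ω') a(Ω) a(Ω') dσ(Ω') dσ(Ω) ≤ (1 − 4π κ₀) ∫ a² dσ`. -/
theorem kernel_bilinear_bound
    (κ : S2 → S2 → ℝ) (κ₀ : ℝ) (hκmeas : Measurable (Function.uncurry κ))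
    (hκsym : ∀ Ω Ω' : S2, κ Ω Ω' = κ Ω' Ω)
    (hκ₀pos : 0 < κ₀) (hκlb : ∀ Ω Ω' : S2, κ₀ ≤ κ Ω Ω')
    (hκnorm : ∀ Ω : S2, ∫ Ω', κ Ω Ω' ∂σS = 1)
    (a : S2 → ℝ) (hameas : Measurable a) (habd : ∃ C : ℝ, ∀ x : S2, |a x| ≤ C)
    (hamean : ∫ Ω, a Ω ∂σS = 0) :
    ∫ Ω, (∫ Ω', κ Ω Ω' * a Ω * a Ω' ∂σS) ∂σS ≤ (1 - 4 * π * κ₀) * ∫ Ω, (a Ω) ^ 2 ∂σS :=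
  kernel_bilinear_bound_general κ κ₀ hκmeas hκsym hκlb hκnorm a hameas habd hamean
end
end

section
/- Let b₁, …, b_m : S² → ℝ be continuous, linearly independent (as functions on S²), and all odd (b_i(−x) = −b_i(x) for all x ∈ S²). Let n ∈ ℝ³ be a unit vector. Then the Gram matrix G ∈ ℝ^{m×m} with entries G_{ij} = ∫_{{x ∈ S² : ⟨n,x⟩ < 0}} b_i(x) b_j(x) dσ(x) is symmetric positive definite; in particular it is invertible. -/
open MeasureTheory Metric
open scoped RealInnerProductSpace Real Matrix

noncomputable section

open Set in
open scoped Pointwise in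
lemma σS_openPos : σS.IsOpenPosMeasure := by
  constructor
  intro s hs hne
  unfold σS
  have happ := Measure.toSphere_apply' (volume : Measure E3) hs.measurableSet
  rw [happ]
  refine mul_ne_zero (by norm_num [finrank_euclideanSpace]) ?_
  -- find open nonempty V inside the cone
  obtain ⟨T, hT, hTs⟩ := isOpen_induced_iff.mp hs
  have himg : (↑) '' s = T ∩ sphere (0 : E3) 1 := by
    rw [← hTs, Subtype.image_preimage_coe, inter_comm]
  set V : Set E3 := {y | ‖y‖ ∈ Ioo (1/2 : ℝ) 1} ∩ (fun y => ‖y‖⁻¹ • y) ⁻¹' T with hV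
  have hWopen : IsOpen {y : E3 | ‖y‖ ∈ Ioo (1/2 : ℝ) 1} :=
    isOpen_Ioo.preimage continuous_norm
  have hVopen : IsOpen V := by
    refine ContinuousOn.isOpen_inter_preimage ?_ hWopen hT
    refine ContinuousOn.fun_smul ?_ continuousOn_id
    exact ContinuousOn.inv₀ continuous_norm.continuousOn
      (fun y hy => by have := hy.1; positivity)
  have hVne : V.Nonempty := by
    obtain ⟨x, hx⟩ := hne
    refine ⟨(3/4 : ℝ) • (x : E3), ?_, ?_⟩
    · have hx1 : ‖(x : E3)‖ = 1 := mem_sphere_zero_iff_norm.mp x.2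
      have hns : ‖(3/4 : ℝ) • (x : E3)‖ = 3/4 := by
        rw [norm_smul, hx1, mul_one, Real.norm_eq_abs]; norm_num
      rw [mem_setOf_eq, hns]
      constructor <;> norm_num
    · have hx1 : ‖(x : E3)‖ = 1 := mem_sphere_zero_iff_norm.mp x.2
      have hns : ‖(3/4 : ℝ) • (x : E3)‖ = 3/4 := by
        rw [norm_smul, hx1, mul_one, Real.norm_eq_abs]; norm_num
      have h34 : ((3/4:ℝ))⁻¹ • ((3/4:ℝ) • (x : E3)) = (x : E3) :=
        inv_smul_smul₀ (by norm_num) _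
      rw [mem_preimage, hns, h34]
      have hxt : (x : E3) ∈ T ∩ sphere (0:E3) 1 := by
        rw [← himg]; exact ⟨x, hx, rfl⟩
      exact hxt.1
  have hsub : V ⊆ Ioo (0:ℝ) 1 • ((↑) '' s) := by
    rintro y ⟨hy1, hy2⟩
    have hy0 : ‖y‖ ≠ 0 := by have := hy1.1; positivity
    have hz : ‖y‖⁻¹ • y ∈ ((↑) '' s : Set E3) := by
      rw [himg]
      refine ⟨hy2, ?_⟩
      rw [mem_sphere_zero_iff_norm, norm_smul, norm_inv, norm_norm,
        inv_mul_cancel₀ hy0]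
    have : y = ‖y‖ • (‖y‖⁻¹ • y) := by rw [smul_inv_smul₀ hy0]
    rw [this]
    exact Set.smul_mem_smul ⟨hy1.1.trans' (by norm_num), hy1.2⟩ hz
  exact fun h => (hVopen.measure_ne_zero volume hVne) (measure_mono_null hsub h)

lemma mem_closure_half (n : E3) (hn : ‖n‖ = 1) (x : S2) (hx : ⟪n, (x : E3)⟫ ≤ 0) :
    x ∈ closure {y : S2 | ⟪n, (y : E3)⟫ < 0} := by
  set s : ℕ → ℝ := fun k => ((k : ℝ) + 2)⁻¹ with hs
  have hspos : ∀ k, 0 < s k := fun k => by positivity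
  have hslt : ∀ k, s k < 1 := fun k => by
    rw [hs]
    rw [inv_lt_one_iff₀]; right; linarith [Nat.cast_nonneg (α := ℝ) k]
  set u : ℕ → E3 := fun k => (x : E3) - s k • n with hu
  have hx1 : ‖(x : E3)‖ = 1 := mem_sphere_zero_iff_norm.mp x.2
  have hupos : ∀ k, 0 < ‖u k‖ := by
    intro k
    have h1 : ‖(x : E3)‖ - ‖s k • n‖ ≤ ‖u k‖ := norm_sub_norm_le _ _
    have h2 : ‖s k • n‖ = s k := by
      rw [norm_smul, hn, Real.norm_eq_abs, abs_of_pos (hspos k), mul_one]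
    rw [h2, hx1] at h1
    linarith [hslt k]
  set v : ℕ → S2 := fun k => ⟨‖u k‖⁻¹ • u k, by
    rw [mem_sphere_zero_iff_norm, norm_smul, norm_inv, norm_norm,
      inv_mul_cancel₀ (hupos k).ne']⟩ with hv
  have hmem : ∀ k, v k ∈ {y : S2 | ⟪n, (y : E3)⟫ < 0} := by
    intro k
    show ⟪n, ‖u k‖⁻¹ • u k⟫ < 0
    rw [real_inner_smul_right]
    refine mul_neg_of_pos_of_neg (inv_pos.2 (hupos k)) ?_
    rw [hu]
    simp only [inner_sub_right, real_inner_smul_right, real_inner_self_eq_norm_sq, hn]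
    nlinarith [hspos k]
  have hs0 : Filter.Tendsto s Filter.atTop (nhds 0) := by
    apply Filter.Tendsto.inv_tendsto_atTop
    exact Filter.tendsto_atTop_add_const_right _ 2 tendsto_natCast_atTop_atTop
  have hut : Filter.Tendsto u Filter.atTop (nhds (x : E3)) := by
    have := Filter.Tendsto.sub (tendsto_const_nhds (x := (x : E3))) (hs0.smul_const n)
    simpa using this
  have hvt : Filter.Tendsto v Filter.atTop (nhds x) := by
    rw [tendsto_subtype_rng]
    have hun : Filter.Tendsto (fun k => ‖u k‖⁻¹) Filter.atTop (nhds 1) := by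
      have := (hut.norm).inv₀ (by rw [hx1]; norm_num)
      simpa [hx1] using this
    have := hun.smul hut
    simpa using this
  exact mem_closure_of_tendsto hvt (Filter.Eventually.of_forall hmem)

/-- For continuous, linearly independent, odd functions `b₁,…,b_m` on `S²` and a unit vector
`n ∈ ℝ³`, the Gram matrix `G_{ij} = ∫_{⟨n,x⟩<0} b_i b_j dσ` is symmetric positive definite,
in particular invertible. -/
theorem halfsphere_gram_posDef {m : ℕ} (b : Fin m → S2 → ℝ)
    (hbcont : ∀ i, Continuous (b i))
    (hbli : LinearIndependent ℝ b)
    (hbodd : ∀ i, ∀ x : S2, b i (-x) = -b i x)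
    (n : E3) (hn : ‖n‖ = 1)
    (G : Matrix (Fin m) (Fin m) ℝ)
    (hG : ∀ i j, G i j = ∫ x in {x : S2 | ⟪n, (x : E3)⟫ < 0}, b i x * b j x ∂σS) :
    G.PosDef ∧ IsUnit G := by
  haveI := σS_openPos
  set U : Set S2 := {x : S2 | ⟪n, (x : E3)⟫ < 0} with hU
  have hinner : Continuous fun x : S2 => ⟪n, (x : E3)⟫ :=
    (continuous_const.inner continuous_subtype_val)
  have hUopen : IsOpen U := isOpen_lt hinner continuous_const
  have hUmeas : MeasurableSet U := hUopen.measurableSet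
  -- integrability
  haveI : IsFiniteMeasure σS := by unfold σS; infer_instance
  have hint : ∀ g : S2 → ℝ, Continuous g → IntegrableOn g U σS := by
    intro g hg
    exact (hg.integrable_of_hasCompactSupport
      (HasCompactSupport.of_compactSpace g)).integrableOn
  -- quadratic form formula
  have hquad : ∀ c : Fin m → ℝ,
      c ⬝ᵥ (G *ᵥ c) = ∫ x in U, (∑ i, c i * b i x) ^ 2 ∂σS := by
    intro c
    have hsum : ∀ x : S2, (∑ i, c i * b i x) ^ 2
        = ∑ i, ∑ j, (c i * c j) * (b i x * b j x) := by
      intro x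
      rw [sq, Finset.sum_mul_sum]
      congr 1; funext i; congr 1; funext j; ring
    calc c ⬝ᵥ (G *ᵥ c) = ∑ i, ∑ j, (c i * c j) * G i j := by
          simp only [dotProduct, Matrix.mulVec, Finset.mul_sum]
          congr 1; funext i; congr 1; funext j; ring
      _ = ∑ i, ∑ j, ∫ x in U, (c i * c j) * (b i x * b j x) ∂σS := by
          congr 1; funext i; congr 1; funext j
          rw [hG i j, MeasureTheory.integral_const_mul]
      _ = ∫ x in U, ∑ i, ∑ j, (c i * c j) * (b i x * b j x) ∂σS := by
          have h1 : ∀ (i : Fin m), ∀ j ∈ Finset.univ,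
              IntegrableOn (fun x => (c i * c j) * (b i x * b j x)) U σS :=
            fun i j _ => hint _ (continuous_const.mul ((hbcont i).mul (hbcont j)))
          rw [MeasureTheory.integral_finset_sum _
            (fun i _ => MeasureTheory.integrable_finset_sum _ (h1 i))]
          refine Finset.sum_congr rfl fun i _ => ?_
          rw [MeasureTheory.integral_finset_sum _ (h1 i)]
      _ = ∫ x in U, (∑ i, c i * b i x) ^ 2 ∂σS := by
          refine integral_congr_ae (Filter.Eventually.of_forall fun x => ?_)
          exact (hsum x).symm
  have hnonneg : ∀ c : Fin m → ℝ, 0 ≤ c ⬝ᵥ (G *ᵥ c) := by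
    intro c
    rw [hquad]
    exact setIntegral_nonneg hUmeas fun x _ => sq_nonneg _
  have hne : ∀ c : Fin m → ℝ, c ≠ 0 → c ⬝ᵥ (G *ᵥ c) ≠ 0 := by
    intro c hc h0
    set f : S2 → ℝ := fun x => ∑ i, c i * b i x with hf
    have hfcont : Continuous f := continuous_finset_sum _ fun i _ =>
      continuous_const.mul (hbcont i)
    have hsqint : IntegrableOn (fun x => f x ^ 2) U σS :=
      hint _ (hfcont.pow 2)
    rw [hquad] at h0
    have hae : (fun x => f x ^ 2) =ᵐ[σS.restrict U] 0 :=
      (setIntegral_eq_zero_iff_of_nonneg_ae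
        (Filter.Eventually.of_forall fun x => sq_nonneg _) hsqint).mp h0
    have hEqOn : Set.EqOn (fun x => f x ^ 2) 0 U :=
      σS.eqOn_open_of_ae_eq hae hUopen (hfcont.pow 2).continuousOn
        continuous_const.continuousOn
    have hfU : Set.EqOn f 0 U := by
      intro x hx
      have := hEqOn hx
      simpa [pow_eq_zero_iff] using this
    have hfclos : Set.EqOn f 0 (closure U) :=
      hfU.closure hfcont continuous_const
    have hfzero : ∀ x : S2, f x = 0 := by
      intro x
      rcases le_or_gt ⟪n, (x : E3)⟫ 0 with h | h
      · exact hfclos (mem_closure_half n hn x h)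
      · have hxm : (-x : S2) ∈ U := by
          have hcoe : ((-x : S2) : E3) = -(x : E3) := rfl
          simp only [hU, Set.mem_setOf_eq, hcoe, inner_neg_right]
          linarith
        have hodd : f (-x) = -f x := by
          simp only [hf, hbodd]
          rw [← Finset.sum_neg_distrib]
          congr 1; funext i; ring
        have := hfU hxm
        rw [hodd] at this
        have : f x = 0 := by
          have := congrArg Neg.neg this
          simpa using this
        exact this
    have : ∀ i, c i = 0 := by
      apply Fintype.linearIndependent_iff.mp hbli
      funext x
      simpa [Finset.sum_apply] using hfzero x
    exact hc (funext this)
  have hposdef : G.PosDef := by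
    rw [Matrix.posDef_iff_dotProduct_mulVec]
    constructor
    · ext i j
      simp only [Matrix.conjTranspose_apply, RCLike.star_def, starRingEnd_apply, star_trivial]
      rw [hG i j, hG j i]
      congr 1; funext x; ring
    · intro c hc
      have h1 : star c = c := by simp
      rw [h1]
      exact lt_of_le_of_ne (hnonneg c) (Ne.symm (hne c hc))
  exact ⟨hposdef, hposdef.isUnit⟩
end
end

section
/- Let n ∈ ℝ³ be a unit vector, R = 2nnᵀ − I₃, and r_n(x) = x − 2⟨n,x⟩n. Let b : S² → ℝ^m be continuous with all components odd (b(−x) = −b(x)), and suppose there is a matrix M ∈ ℝ^{m×m} with b(Rx) = M b(x) for all x ∈ S². Then the matrix H = ∫_{{x ∈ S² : ⟨n,x⟩ < 0}} b(x) (b(x) − ρ b(r_n(x)))ᵀ dσ(x) factorizes as H = G (I_m + ρ Mᵀ), where G = ∫_{{x ∈ S² : ⟨n,x⟩ < 0}} b(x) b(x)ᵀ dσ(x) and ρ ∈ ℝ is arbitrary. -/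
open MeasureTheory Metric
open scoped RealInnerProductSpace Real Matrix

noncomputable section

/-! The reflection `r_n` is `x ↦ -Rx`, so oddness of `b` and `b ∘ R = M b` give
`b (r_n x) = -M b(x)` on the sphere. The integrand of `H` is then `b(x) ((I + ρ M) b(x))ᵀ`, and
pulling the constant matrix out of the integral gives `H = G (I + ρ M)ᵀ`. -/

instance inst_s9 : IsFiniteMeasure σS := inferInstanceAs (IsFiniteMeasure (volume : Measure E3).toSphere)

section Reflection

variable {F : Type*} [NormedAddCommGroup F] [InnerProductSpace ℝ F] {n : F}

theorem norm_two_inner_smul_sub (hn : ‖n‖ = 1) (x : F) : ‖(2 * ⟪n, x⟫) • n - x‖ = ‖x‖ := by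
  have hsq : ‖(2 * ⟪n, x⟫) • n - x‖ ^ 2 = ‖x‖ ^ 2 := by
    rw [norm_sub_sq_real, norm_smul, real_inner_smul_left, hn, Real.norm_eq_abs, mul_one,
      sq_abs]
    ring
  exact (pow_left_inj₀ (norm_nonneg _) (norm_nonneg _) two_ne_zero).mp hsq

theorem apply_sub_two_inner_smul_eq_neg_mulVec {m : ℕ} (hn : ‖n‖ = 1) {b : F → Fin m → ℝ}
    (hbodd : ∀ x : F, x ∈ sphere (0 : F) 1 → b (-x) = -b x) {M : Matrix (Fin m) (Fin m) ℝ}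
    (hM : ∀ x : F, x ∈ sphere (0 : F) 1 → b ((2 * ⟪n, x⟫) • n - x) = M *ᵥ b x)
    {x : F} (hx : x ∈ sphere (0 : F) 1) :
    b (x - (2 * ⟪n, x⟫) • n) = -(M *ᵥ b x) := by
  have hRx : (2 * ⟪n, x⟫) • n - x ∈ sphere (0 : F) 1 := by
    rwa [mem_sphere_zero_iff_norm, norm_two_inner_smul_sub hn, ← mem_sphere_zero_iff_norm]
  rw [← neg_sub, hbodd _ hRx, hM _ hx]

end Reflection

theorem integral_mul_mulVec_apply {α : Type*} [MeasurableSpace α] {μ : Measure α} {m : ℕ}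
    {f : α → Fin m → ℝ} (hf : ∀ i k, Integrable (fun x => f x i * f x k) μ)
    (A : Matrix (Fin m) (Fin m) ℝ) (i j : Fin m) :
    ∫ x, f x i * (A *ᵥ f x) j ∂μ = (Matrix.of (fun i k => ∫ x, f x i * f x k ∂μ) * Aᵀ) i j := by
  have hexpand : ∀ x, f x i * (A *ᵥ f x) j = ∑ k, A j k * (f x i * f x k) := fun x => by
    simp only [Matrix.mulVec, dotProduct, Finset.mul_sum]
    exact Finset.sum_congr rfl fun k _ => by ring
  simp only [hexpand, Matrix.mul_apply, Matrix.of_apply, Matrix.transpose_apply]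
  rw [integral_finsetSum _ fun k _ => (hf i k).const_mul _]
  exact Finset.sum_congr rfl fun k _ => by rw [integral_const_mul, mul_comm]

/-- Factorization of the Marshak boundary matrix: with `R = 2nnᵀ − I₃` (acting as
`x ↦ 2⟨n,x⟩n − x`), `r_n(x) = x − 2⟨n,x⟩n = −Rx`, `b : S² → ℝ^m` continuous with odd
components and `b(Rx) = M b(x)` on `S²`, the matrix
`H = ∫_{⟨n,x⟩<0} b(x)(b(x) − ρ b(r_n(x)))ᵀ dσ` equals `G (I + ρ Mᵀ)` where
`G = ∫_{⟨n,x⟩<0} b(x) b(x)ᵀ dσ`. -/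
theorem marshak_matrix_factorization {m : ℕ} (n : E3) (hn : ‖n‖ = 1) (ρ : ℝ)
    (b : E3 → Fin m → ℝ)
    (hbcont : Continuous (fun x : S2 => b (x : E3)))
    (hbodd : ∀ x : E3, x ∈ Metric.sphere (0 : E3) 1 → b (-x) = -b x)
    (M : Matrix (Fin m) (Fin m) ℝ)
    (hM : ∀ x : E3, x ∈ Metric.sphere (0 : E3) 1 →
      b ((2 * ⟪n, x⟫) • n - x) = M *ᵥ b x)
    (H G : Matrix (Fin m) (Fin m) ℝ)
    (hH : ∀ i j, H i j = ∫ x in {x : S2 | ⟪n, (x : E3)⟫ < 0},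
      b (x : E3) i * (b (x : E3) j - ρ * b ((x : E3) - (2 * ⟪n, (x : E3)⟫) • n) j) ∂σS)
    (hG : ∀ i j, G i j = ∫ x in {x : S2 | ⟪n, (x : E3)⟫ < 0},
      b (x : E3) i * b (x : E3) j ∂σS) :
    H = G * (1 + ρ • Mᵀ) := by
  set S := {x : S2 | ⟪n, (x : E3)⟫ < 0}
  have hint : ∀ i k, Integrable (fun x : S2 => b (x : E3) i * b (x : E3) k) (σS.restrict S) :=
    fun i k => (((continuous_apply i).comp hbcont).mul ((continuous_apply k).comp hbcont)
      |>.integrable_of_hasCompactSupport (.of_compactSpace _)).restrict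
  have hG' : G = Matrix.of fun i k => ∫ x in S, b (x : E3) i * b (x : E3) k ∂σS := Matrix.ext hG
  ext i j
  calc H i j = ∫ x in S, b (x : E3) i * ((1 + ρ • M) *ᵥ b x) j ∂σS := by
        rw [hH]
        congr 1 with x
        rw [apply_sub_two_inner_smul_eq_neg_mulVec hn hbodd hM x.2, Matrix.add_mulVec,
          Matrix.one_mulVec, Matrix.smul_mulVec]
        simp only [Pi.add_apply, Pi.smul_apply, Pi.neg_apply, smul_eq_mul]
        ring
    _ = (G * (1 + ρ • Mᵀ)) i j := by
      rw [integral_mul_mulVec_apply hint, ← hG', Matrix.transpose_add, Matrix.transpose_one,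
        Matrix.transpose_smul]
end
end

section
/- Let n ∈ ℝ³ be a unit vector, R = 2nnᵀ − I₃, and r_n(x) = x − 2⟨n,x⟩n. Let b : S² → ℝ^m be continuous with all components odd (b(−x) = −b(x)) and with linearly independent components (as functions on S²), and suppose there is an orthogonal matrix M ∈ ℝ^{m×m} (MᵀM = I_m) with b(Rx) = M b(x) for all x ∈ S². Then for every ρ ∈ (−1, 1) the matrix H = ∫_{{x ∈ S² : ⟨n,x⟩ < 0}} b(x) (b(x) − ρ b(r_n(x)))ᵀ dσ(x) is invertible. -/
open MeasureTheory Metric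
open scoped RealInnerProductSpace Real Matrix

noncomputable section

namespace MarshakAux

open scoped Pointwise ENNReal

/-- The map induced on the unit sphere by a linear isometry equivalence. -/
def sphMap (e : E3 ≃ₗᵢ[ℝ] E3) (x : S2) : S2 :=
  ⟨e x, by
    have hx : ‖(x : E3)‖ = 1 := mem_sphere_zero_iff_norm.mp x.2
    simp [mem_sphere_zero_iff_norm, e.norm_map, hx]⟩

lemma sphMap_continuous (e : E3 ≃ₗᵢ[ℝ] E3) : Continuous (sphMap e) :=
  Continuous.subtype_mk (e.continuous.comp continuous_subtype_val) _

lemma sphMap_emb (e : E3 ≃ₗᵢ[ℝ] E3) : MeasurableEmbedding (sphMap e) := by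
  let h : Homeomorph S2 S2 :=
    { toFun := sphMap e
      invFun := sphMap e.symm
      left_inv := fun x => Subtype.ext (e.symm_apply_apply x)
      right_inv := fun x => Subtype.ext (e.apply_symm_apply x)
      continuous_toFun := sphMap_continuous e
      continuous_invFun := sphMap_continuous e.symm }
  exact h.measurableEmbedding

lemma smul_image_linear (e : E3 ≃ₗᵢ[ℝ] E3) (T : Set E3) :
    Set.Ioo (0:ℝ) 1 • (e '' T) = e '' (Set.Ioo (0:ℝ) 1 • T) := by
  ext y
  simp only [Set.mem_smul, Set.mem_image]
  constructor
  · rintro ⟨r, hr, -, ⟨t, ht, rfl⟩, rfl⟩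
    exact ⟨r • t, ⟨r, hr, t, ht, rfl⟩, e.map_smul r t⟩
  · rintro ⟨-, ⟨r, hr, t, ht, rfl⟩, rfl⟩
    exact ⟨r, hr, e t, ⟨t, ht, rfl⟩, (e.map_smul r t).symm⟩

/-- The surface measure is invariant under linear isometries. -/
lemma sphMap_measurePreserving (e : E3 ≃ₗᵢ[ℝ] E3) :
    MeasurePreserving (sphMap e) σS σS := by
  refine ⟨(sphMap_continuous e).measurable, ?_⟩
  ext s hs
  rw [Measure.map_apply (sphMap_continuous e).measurable hs]
  show (volume : Measure E3).toSphere _ = (volume : Measure E3).toSphere s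
  rw [Measure.toSphere_apply' _ (hs.preimage (sphMap_continuous e).measurable),
    Measure.toSphere_apply' _ hs]
  congr 1
  have himg : (Subtype.val '' (sphMap e ⁻¹' s)) = e.symm '' (Subtype.val '' s) := by
    ext y
    simp only [Set.mem_image, Set.mem_preimage]
    constructor
    · rintro ⟨x, hx, rfl⟩
      exact ⟨sphMap e x, ⟨_, hx, rfl⟩, (e.symm_apply_apply _)⟩
    · rintro ⟨z, ⟨x, hx, rfl⟩, rfl⟩
      refine ⟨sphMap e.symm x, ?_, rfl⟩
      have : sphMap e (sphMap e.symm x) = x := Subtype.ext (e.apply_symm_apply x)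
      rw [this]; exact hx
  rw [himg, smul_image_linear e.symm]
  have hpre : e.symm '' (Set.Ioo (0:ℝ) 1 • (Subtype.val '' s)) =
      e ⁻¹' (Set.Ioo (0:ℝ) 1 • (Subtype.val '' s)) := by
    ext y
    simp only [Set.mem_image, Set.mem_preimage]
    constructor
    · rintro ⟨z, hz, rfl⟩; simpa [e.apply_symm_apply] using hz
    · intro hy; exact ⟨e y, hy, e.symm_apply_apply y⟩
  rw [hpre]
  exact e.measurePreserving.measure_preimage_emb
    (e.toHomeomorph.measurableEmbedding) _

/-- The surface measure is positive on nonempty open subsets of the sphere. -/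
lemma σS_pos_of_isOpen {U : Set S2} (hU : IsOpen U) (hne : U.Nonempty) : σS U ≠ 0 := by
  obtain ⟨W, hWopen, hWeq⟩ := isOpen_induced_iff.mp hU
  set V : Set E3 := {y | (0 < ‖y‖ ∧ ‖y‖ < 1) ∧ ‖y‖⁻¹ • y ∈ W} with hV
  have hSopen : IsOpen {y : E3 | 0 < ‖y‖ ∧ ‖y‖ < 1} :=
    (isOpen_lt continuous_const continuous_norm).inter (isOpen_lt continuous_norm continuous_const)
  have hVopen : IsOpen V := by
    have hcont : ContinuousOn (fun y : E3 => ‖y‖⁻¹ • y) {y : E3 | 0 < ‖y‖ ∧ ‖y‖ < 1} := by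
      apply ContinuousOn.fun_smul _ continuous_id.continuousOn
      exact (continuous_norm.continuousOn).inv₀ fun y hy => ne_of_gt hy.1
    exact hcont.isOpen_inter_preimage hSopen hWopen
  have hVne : V.Nonempty := by
    obtain ⟨x, hx⟩ := hne
    refine ⟨(2⁻¹ : ℝ) • (x : E3), ?_⟩
    have hxn : ‖(x : E3)‖ = 1 := mem_sphere_zero_iff_norm.mp x.2
    have h1 : ‖(2⁻¹ : ℝ) • (x : E3)‖ = 2⁻¹ := by
      rw [norm_smul, hxn]; norm_num
    constructor
    · constructor <;> rw [h1] <;> norm_num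
    · rw [h1]
      have : ((2:ℝ)⁻¹)⁻¹ • (2⁻¹ : ℝ) • (x : E3) = (x : E3) := by
        rw [smul_smul]; norm_num
      rw [this]
      have : x ∈ Subtype.val ⁻¹' W := hWeq ▸ hx
      exact this
  have hsub : V ⊆ Set.Ioo (0:ℝ) 1 • (Subtype.val '' U) := by
    rintro y ⟨⟨hy0, hy1⟩, hyW⟩
    have hu : ‖‖y‖⁻¹ • y‖ = 1 := by
      rw [norm_smul, norm_inv, norm_norm, inv_mul_cancel₀ (ne_of_gt hy0)]
    refine ⟨‖y‖, ⟨hy0, hy1⟩, ‖y‖⁻¹ • y, ⟨⟨‖y‖⁻¹ • y, mem_sphere_zero_iff_norm.mpr hu⟩, ?_, rfl⟩, ?_⟩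
    · show (⟨‖y‖⁻¹ • y, _⟩ : S2) ∈ U
      rw [← hWeq]; exact hyW
    · show ‖y‖ • ‖y‖⁻¹ • y = y
      rw [smul_smul, mul_inv_cancel₀ (ne_of_gt hy0), one_smul]
  intro h0
  have hms : MeasurableSet U := hU.measurableSet
  rw [show σS U = (volume : Measure E3).toSphere U from rfl,
    Measure.toSphere_apply' _ hms] at h0
  have h3 : (Module.finrank ℝ E3 : ℝ≥0∞) ≠ 0 := by
    simp [finrank_euclideanSpace_fin]
  rcases mul_eq_zero.mp h0 with h | h
  · exact h3 h
  · have : volume V = 0 := le_antisymm (h ▸ measure_mono hsub) zero_le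
    exact hVopen.measure_ne_zero volume hVne this

/-- A continuous odd function on the sphere vanishing on the open lower half-sphere
vanishes everywhere. -/
lemma zero_of_odd_zero_on_half (n : E3) (hn : ‖n‖ = 1) (f : S2 → ℝ) (hf : Continuous f)
    (hodd : ∀ x y : S2, (y : E3) = -(x : E3) → f y = - f x)
    (h0 : ∀ x : S2, ⟪n, (x : E3)⟫ < 0 → f x = 0) : ∀ x, f x = 0 := by
  have hnn : ⟪n, n⟫ = 1 := by
    rw [real_inner_self_eq_norm_sq, hn]; norm_num
  intro x
  have hxn : ‖(x : E3)‖ = 1 := mem_sphere_zero_iff_norm.mp x.2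
  rcases lt_trichotomy ⟪n, (x : E3)⟫ 0 with h | h | h
  · exact h0 x h
  · -- equator case: approach along a great circle through the lower half-sphere
    have hxx : ⟪(x : E3), (x : E3)⟫ = 1 := by
      rw [real_inner_self_eq_norm_sq, hxn]; norm_num
    have hmem : ∀ t : ℝ, Real.cos t • (x : E3) - Real.sin t • n ∈ Metric.sphere (0 : E3) 1 := by
      intro t
      set v := Real.cos t • (x : E3) - Real.sin t • n with hv
      have hvv : ⟪v, v⟫ = 1 := by
        simp only [hv, inner_sub_left, inner_sub_right, real_inner_smul_left,
          real_inner_smul_right, hxx, hnn, h, real_inner_comm n (x : E3)]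
        nlinarith [Real.sin_sq_add_cos_sq t]
      have hnv := real_inner_self_eq_norm_sq v
      rw [mem_sphere_zero_iff_norm]
      nlinarith [norm_nonneg v]
    set γ : ℝ → S2 := fun t => ⟨Real.cos t • (x : E3) - Real.sin t • n, hmem t⟩ with hγ
    have hγcont : Continuous γ := by
      apply Continuous.subtype_mk
      exact (Real.continuous_cos.smul continuous_const).sub
        (Real.continuous_sin.smul continuous_const)
    have hγ0 : γ 0 = x := by
      apply Subtype.ext
      simp [hγ]
    have hA : ∀ t ∈ Set.Ioo (0:ℝ) π, f (γ t) = 0 := by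
      intro t ht
      apply h0
      show ⟪n, Real.cos t • (x : E3) - Real.sin t • n⟫ < 0
      rw [inner_sub_right, real_inner_smul_right, real_inner_smul_right, h, hnn]
      have := Real.sin_pos_of_pos_of_lt_pi ht.1 ht.2
      nlinarith
    have h1 : Filter.Tendsto (f ∘ γ) (nhdsWithin 0 (Set.Ioi 0)) (nhds (f x)) := by
      have h2 := (hf.comp hγcont).continuousAt (x := 0)
      rw [ContinuousAt, Function.comp_apply, hγ0] at h2
      exact h2.mono_left nhdsWithin_le_nhds
    have h2 : Filter.Tendsto (f ∘ γ) (nhdsWithin 0 (Set.Ioi 0)) (nhds 0) := by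
      apply Filter.Tendsto.congr' _ tendsto_const_nhds
      filter_upwards [Ioo_mem_nhdsGT_of_mem (by constructor <;> [rfl; exact Real.pi_pos] :
        (0:ℝ) ∈ Set.Ico 0 π)] with t ht
      exact (hA t ht).symm
    exact tendsto_nhds_unique h1 h2
  · have hy : -(x : E3) ∈ Metric.sphere (0 : E3) 1 := by
      rw [mem_sphere_zero_iff_norm, norm_neg, hxn]
    set y : S2 := ⟨-(x : E3), hy⟩
    have h1 : f y = - f x := hodd x y rfl
    have hy0 : f y = 0 := by
      apply h0
      show ⟪n, -(x : E3)⟫ < 0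
      rw [inner_neg_right]
      linarith
    linarith [h1, hy0]

lemma quad_expand {m : ℕ} (c v w : Fin m → ℝ) (ρ : ℝ) :
    ∑ i, ∑ j, c i * (v i * (v j + ρ * w j)) * c j
      = (c ⬝ᵥ v) * (c ⬝ᵥ v) + ρ * ((c ⬝ᵥ v) * (c ⬝ᵥ w)) := by
  have h1 : ∑ i, ∑ j, c i * (v i * (v j + ρ * w j)) * c j
      = (∑ i, c i * v i) * (∑ j, (v j + ρ * w j) * c j) := by
    rw [Finset.sum_mul_sum]
    apply Finset.sum_congr rfl; intro i _
    apply Finset.sum_congr rfl; intro j _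
    ring
  have h2 : ∑ j, (v j + ρ * w j) * c j = (∑ j, c j * v j) + ρ * ∑ j, c j * w j := by
    rw [Finset.mul_sum, ← Finset.sum_add_distrib]
    apply Finset.sum_congr rfl; intro j _
    ring
  rw [h1, h2]
  simp only [dotProduct]
  ring

end MarshakAux

open MarshakAux

/-- Invertibility of the Marshak boundary matrix `H_o`: with `R = 2nnᵀ − I₃` (acting as
`x ↦ 2⟨n,x⟩n − x`), `r_n(x) = x − 2⟨n,x⟩n = −Rx`, `b : S² → ℝ^m` continuous with odd,
linearly independent components, and an orthogonal `M` with `b(Rx) = M b(x)` on `S²`, the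
matrix `H = ∫_{⟨n,x⟩<0} b(x)(b(x) − ρ b(r_n(x)))ᵀ dσ` is invertible for every
`ρ ∈ (−1,1)`. -/
theorem marshak_matrix_invertible {m : ℕ} (n : E3) (hn : ‖n‖ = 1)
    (ρ : ℝ) (hρ : ρ ∈ Set.Ioo (-1 : ℝ) 1)
    (b : E3 → Fin m → ℝ)
    (hbcont : Continuous (fun x : S2 => b (x : E3)))
    (hbodd : ∀ x : E3, x ∈ Metric.sphere (0 : E3) 1 → b (-x) = -b x)
    (hbli : LinearIndependent ℝ (fun i : Fin m => fun x : S2 => b (x : E3) i))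
    (M : Matrix (Fin m) (Fin m) ℝ) (hMorth : Mᵀ * M = 1)
    (hM : ∀ x : E3, x ∈ Metric.sphere (0 : E3) 1 →
      b ((2 * ⟪n, x⟫) • n - x) = M *ᵥ b x)
    (H : Matrix (Fin m) (Fin m) ℝ)
    (hH : ∀ i j, H i j = ∫ x in {x : S2 | ⟪n, (x : E3)⟫ < 0},
      b (x : E3) i * (b (x : E3) j - ρ * b ((x : E3) - (2 * ⟪n, (x : E3)⟫) • n) j) ∂σS) :
    IsUnit H := by
  classical
  have hnn : ⟪n, n⟫ = 1 := by
    rw [real_inner_self_eq_norm_sq, hn]; norm_num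
  set A : Set S2 := {x : S2 | ⟪n, (x : E3)⟫ < 0} with hA
  have hinncont : Continuous fun x : S2 => ⟪n, (x : E3)⟫ :=
    Continuous.inner continuous_const continuous_subtype_val
  have hAopen : IsOpen A := isOpen_lt hinncont continuous_const
  have hAms : MeasurableSet A := hAopen.measurableSet
  -- the reflection `R`
  set eR : E3 ≃ₗᵢ[ℝ] E3 := Submodule.reflection (ℝ ∙ n) with heR
  have hR : ∀ x : E3, eR x = (2 * ⟪n, x⟫) • n - x := by
    intro x
    rw [heR, Submodule.reflection_apply, Submodule.starProjection_singleton, hn]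
    norm_num [two_smul, two_mul, add_smul]
  set φ : S2 → S2 := sphMap eR with hφ
  have hφcoe : ∀ x : S2, (φ x : E3) = (2 * ⟪n, (x : E3)⟫) • n - (x : E3) := by
    intro x
    show eR (x : E3) = _
    exact hR x
  have hφA : φ ⁻¹' A = A := by
    ext x
    have : ⟪n, (φ x : E3)⟫ = ⟪n, (x : E3)⟫ := by
      rw [hφcoe, inner_sub_right, real_inner_smul_right, hnn]
      ring
    simp only [Set.mem_preimage, hA, Set.mem_setOf_eq, this]
  have hφb : ∀ x : S2, b (φ x : E3) = M *ᵥ b (x : E3) := by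
    intro x
    rw [hφcoe]
    exact hM x x.2
  -- flip identity for the integrand
  have hflip : ∀ x : S2, b ((x : E3) - (2 * ⟪n, (x : E3)⟫) • n) = -(M *ᵥ b (x : E3)) := by
    intro x
    have hy : ((2 * ⟪n, (x : E3)⟫) • n - (x : E3)) ∈ Metric.sphere (0 : E3) 1 := by
      rw [← hφcoe]; exact (φ x).2
    have h1 : b (-((2 * ⟪n, (x : E3)⟫) • n - (x : E3))) =
        -b ((2 * ⟪n, (x : E3)⟫) • n - (x : E3)) := hbodd _ hy
    rw [neg_sub] at h1
    rw [h1, hM x x.2]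
  -- component continuity and integrability
  have hbci : ∀ i, Continuous fun x : S2 => b (x : E3) i :=
    fun i => (continuous_apply i).comp hbcont
  haveI hfin : IsFiniteMeasure σS := by unfold σS; infer_instance
  haveI : IsFiniteMeasureOnCompacts σS :=
    ⟨fun K _ => lt_of_le_of_lt (measure_mono (Set.subset_univ K)) (measure_lt_top σS Set.univ)⟩
  have hint : ∀ g : S2 → ℝ, Continuous g → IntegrableOn g A σS := by
    intro g hg
    have h1 : IntegrableOn g Set.univ σS :=
      hg.continuousOn.integrableOn_compact' isCompact_univ MeasurableSet.univ
    exact (integrableOn_univ.mp h1).integrableOn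
  -- the quadratic form functions
  set F : (Fin m → ℝ) → S2 → ℝ := fun c x => c ⬝ᵥ b (x : E3) with hF
  have hFcont : ∀ c, Continuous (F c) := by
    intro c
    apply continuous_finset_sum
    exact fun i _ => continuous_const.mul (hbci i)
  set G : (Fin m → ℝ) → S2 → ℝ := fun c x => c ⬝ᵥ (M *ᵥ b (x : E3)) with hG
  have hGF : ∀ c x, G c x = F c (φ x) := by
    intro c x
    show c ⬝ᵥ (M *ᵥ b (x : E3)) = c ⬝ᵥ b ((φ x : S2) : E3)
    rw [hφb]
  have hGcont : ∀ c, Continuous (G c) := by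
    intro c
    have : G c = (F c) ∘ φ := funext fun x => hGF c x
    rw [this]
    exact (hFcont c).comp (sphMap_continuous eR)
  -- the quadratic form identity
  have hQ : ∀ c : Fin m → ℝ, c ⬝ᵥ (H *ᵥ c) =
      ∫ x in A, (F c x * F c x + ρ * (F c x * G c x)) ∂σS := by
    intro c
    have hHij : ∀ i j, H i j =
        ∫ x in A, b (x : E3) i * (b (x : E3) j + ρ * (M *ᵥ b (x : E3)) j) ∂σS := by
      intro i j
      rw [hH i j]
      apply setIntegral_congr_fun hAms
      intro x _
      dsimp only
      rw [hflip x]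
      simp only [Pi.neg_apply]
      ring
    have hterm : ∀ (i j : Fin m), Integrable
        (fun x : S2 => c i * (b (x : E3) i * (b (x : E3) j + ρ * (M *ᵥ b (x : E3)) j)) * c j)
        (σS.restrict A) := by
      intro i j
      apply hint
      have hMj : Continuous fun x : S2 => (M *ᵥ b (x : E3)) j := by
        show Continuous fun x : S2 => ∑ k, M j k * b (x : E3) k
        apply continuous_finset_sum
        exact fun k _ => continuous_const.mul (hbci k)
      exact (continuous_const.mul ((hbci i).mul ((hbci j).add
        (continuous_const.mul hMj)))).mul continuous_const
    calc c ⬝ᵥ (H *ᵥ c)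
        = ∑ i, ∑ j, c i * H i j * c j := by
          simp [dotProduct, Matrix.mulVec, Finset.mul_sum, mul_assoc]
      _ = ∑ i, ∑ j, ∫ x in A,
            c i * (b (x : E3) i * (b (x : E3) j + ρ * (M *ᵥ b (x : E3)) j)) * c j ∂σS := by
          apply Finset.sum_congr rfl; intro i _
          apply Finset.sum_congr rfl; intro j _
          rw [hHij i j, ← integral_const_mul, ← integral_mul_const]
      _ = ∫ x in A, ∑ i, ∑ j,
            c i * (b (x : E3) i * (b (x : E3) j + ρ * (M *ᵥ b (x : E3)) j)) * c j ∂σS := by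
          rw [integral_finset_sum _ (fun i _ => integrable_finset_sum Finset.univ
            (fun j (_ : j ∈ Finset.univ) => hterm i j))]
          apply Finset.sum_congr rfl; intro i _
          rw [integral_finset_sum _ (fun j _ => hterm i j)]
      _ = ∫ x in A, (F c x * F c x + ρ * (F c x * G c x)) ∂σS := by
          apply setIntegral_congr_fun hAms
          intro x _
          dsimp only
          exact quad_expand c (b (x : E3)) (M *ᵥ b (x : E3)) ρ
  -- integrability of products
  have hintFF : ∀ c : Fin m → ℝ, IntegrableOn (fun x => F c x * F c x) A σS :=
    fun c => hint _ ((hFcont c).mul (hFcont c))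
  have hintFG : ∀ c : Fin m → ℝ, IntegrableOn (fun x => F c x * G c x) A σS :=
    fun c => hint _ ((hFcont c).mul (hGcont c))
  have hintGG : ∀ c : Fin m → ℝ, IntegrableOn (fun x => G c x * G c x) A σS :=
    fun c => hint _ ((hGcont c).mul (hGcont c))
  -- change of variables: ∫_A G² = ∫_A F²
  have hGG : ∀ c : Fin m → ℝ,
      ∫ x in A, G c x * G c x ∂σS = ∫ x in A, F c x * F c x ∂σS := by
    intro c
    calc ∫ x in A, G c x * G c x ∂σS
        = ∫ x in φ ⁻¹' A, (fun y => F c y * F c y) (φ x) ∂σS := by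
          rw [hφA]
          exact setIntegral_congr_fun hAms fun x _ => by dsimp only; rw [hGF]
      _ = ∫ y in A, F c y * F c y ∂σS := by
          rw [hφ]
          exact (sphMap_measurePreserving eR).setIntegral_preimage_emb (sphMap_emb eR) (fun y => F c y * F c y) A
  -- positivity of ∫_A F² for c ≠ 0
  have hpos : ∀ c : Fin m → ℝ, c ≠ 0 → 0 < ∫ x in A, F c x * F c x ∂σS := by
    intro c hc
    have hnonneg : 0 ≤ ∫ x in A, F c x * F c x ∂σS :=
      setIntegral_nonneg hAms fun x _ => mul_self_nonneg _
    rcases hnonneg.lt_or_eq with h | h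
    · exact h
    exfalso
    have hae := (integral_eq_zero_iff_of_nonneg (fun x => mul_self_nonneg (F c x))
      (hintFF c)).mp h.symm
    have hFA : ∀ x ∈ A, F c x = 0 := by
      by_contra hcon
      push_neg at hcon
      obtain ⟨x₀, hx₀A, hx₀⟩ := hcon
      have hNopen : IsOpen {x : S2 | ¬ F c x = 0} := by
        have : IsOpen ((F c) ⁻¹' ({(0:ℝ)}ᶜ)) :=
          isOpen_compl_singleton.preimage (hFcont c)
        exact this
      have hUopen : IsOpen ({x : S2 | ¬ F c x = 0} ∩ A) := hNopen.inter hAopen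
      have hUne : ({x : S2 | ¬ F c x = 0} ∩ A).Nonempty := ⟨x₀, hx₀, hx₀A⟩
      have h2 : σS.restrict A {x : S2 | ¬ F c x = 0} = 0 := by
        have h3 := ae_iff.mp hae
        simpa [mul_self_eq_zero] using h3
      rw [Measure.restrict_apply hNopen.measurableSet] at h2
      exact σS_pos_of_isOpen hUopen hUne h2
    have hzero : ∀ x : S2, F c x = 0 := by
      apply zero_of_odd_zero_on_half n hn (F c) (hFcont c)
      · intro x y hxy
        show c ⬝ᵥ b (y : E3) = -(c ⬝ᵥ b (x : E3))
        rw [hxy, hbodd _ x.2, dotProduct_neg]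
      · intro x hx
        exact hFA x hx
    have hci := Fintype.linearIndependent_iff.mp hbli c ?_
    · exact hc (funext hci)
    · funext x
      have := hzero x
      simpa [Finset.sum_apply, Pi.smul_apply, smul_eq_mul, hF, dotProduct] using this
  -- conclude invertibility from positive definiteness
  apply Matrix.mulVec_injective_iff_isUnit.mp
  intro c₁ c₂ hc12
  by_contra hne
  set c := c₁ - c₂ with hcdef
  have hc : c ≠ 0 := sub_ne_zero.mpr hne
  have hHc : H *ᵥ c = 0 := by rw [hcdef, Matrix.mulVec_sub, hc12, sub_self]
  have hQc : c ⬝ᵥ (H *ᵥ c) = 0 := by rw [hHc, dotProduct_zero]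
  rw [hQ c] at hQc
  have hsplit : ∫ x in A, (F c x * F c x + ρ * (F c x * G c x)) ∂σS
      = (∫ x in A, F c x * F c x ∂σS) + ρ * ∫ x in A, F c x * G c x ∂σS := by
    rw [integral_add (hintFF c) ((hintFG c).const_mul ρ), integral_const_mul]
  have habs : |∫ x in A, F c x * G c x ∂σS| ≤ ∫ x in A, F c x * F c x ∂σS := by
    have h1 : |∫ x in A, F c x * G c x ∂σS| ≤ ∫ x in A, |F c x| * |G c x| ∂σS := by
      simpa [Real.norm_eq_abs] using
        norm_integral_le_integral_norm (μ := σS.restrict A) (fun x => F c x * G c x)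
    have h2 : ∫ x in A, |F c x| * |G c x| ∂σS
        ≤ ∫ x in A, (F c x * F c x + G c x * G c x) / 2 ∂σS := by
      apply integral_mono (hint _ (((hFcont c).abs).mul ((hGcont c).abs)))
        (((hintFF c).add (hintGG c)).div_const 2)
      intro x
      have h3 := abs_mul (F c x) (G c x)
      have h4 := sq_nonneg (|F c x| - |G c x|)
      have h5 := sq_abs (F c x)
      have h6 := sq_abs (G c x)
      simp only [Pi.add_apply, Pi.mul_apply]
      nlinarith
    have h4 : ∫ x in A, (F c x * F c x + G c x * G c x) / 2 ∂σS
        = ∫ x in A, F c x * F c x ∂σS := by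
      rw [integral_div, integral_add (hintFF c) (hintGG c), hGG c]
      ring
    linarith
  have hρabs : |ρ| < 1 := abs_lt.mpr ⟨hρ.1, hρ.2⟩
  have hFpos := hpos c hc
  have hbound : |ρ * ∫ x in A, F c x * G c x ∂σS|
      ≤ |ρ| * ∫ x in A, F c x * F c x ∂σS := by
    rw [abs_mul]
    exact mul_le_mul_of_nonneg_left habs (abs_nonneg ρ)
  rw [hsplit] at hQc
  have hb2 := abs_le.mp hbound
  nlinarith [hb2.1, hb2.2, hFpos, hρabs]
end
end

section
/- Let n ∈ ℝ³ be a unit vector, r_n(x) = x − 2⟨n,x⟩n, and ρ ∈ ℝ. Let b_o : S² → ℝ^m be bounded measurable with all components odd (b_o(−x) = −b_o(x)) and b_e : S² → ℝ^k be bounded measurable with all components even (b_e(−x) = b_e(x)). Define for a unit vector ν the matrix H_e(ν) = ∫_{{x ∈ S² : ⟨ν,x⟩ < 0}} b_o(x) (b_e(x) − ρ b_e(r_ν(x)))ᵀ dσ(x). Then H_e(−n) = −H_e(n). -/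
/-!
Under the antipodal substitution `x ↦ -x`, which preserves `σ`, the half-sphere `⟪-n, x⟫ < 0`
becomes `⟪n, x⟫ < 0`, and `r_{-n}(-x) = -r_n(x)`. Since `r_n` maps `S²` to itself, oddness of
`b_o` and evenness of `b_e` turn the integrand for `-n` at `-x` into minus the integrand for `n`
at `x`.
-/

open MeasureTheory Metric
open scoped RealInnerProductSpace Real Matrix

noncomputable section

open scoped Pointwise in
theorem MeasureTheory.Measure.measurePreserving_neg_toSphere {E : Type*} [NormedAddCommGroup E]
    [NormedSpace ℝ E] [MeasurableSpace E] [BorelSpace E] (μ : Measure E) [μ.IsNegInvariant] :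
    MeasurePreserving (fun x : sphere (0 : E) 1 => -x) μ.toSphere μ.toSphere := by
  refine ⟨continuous_neg.measurable, Measure.ext fun s hs => ?_⟩
  have hs' : MeasurableSet ((fun x : sphere (0 : E) 1 => -x) ⁻¹' s) :=
    hs.preimage continuous_neg.measurable
  have himage : ((↑) '' ((fun x : sphere (0 : E) 1 => -x) ⁻¹' s) : Set E) = -((↑) '' s) := by
    rw [show (fun x => -x) ⁻¹' s = -s from rfl, ← Set.image_neg_eq_neg, ← Set.image_neg_eq_neg,
      Set.image_image, Set.image_image]
    rfl
  rw [map_apply continuous_neg.measurable hs, toSphere_apply' μ hs', toSphere_apply' μ hs, himage,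
    Set.smul_neg, measure_neg]

theorem Submodule.reflection_orthogonal_singleton_apply_of_norm_eq_one
    {F : Type*} [NormedAddCommGroup F] [InnerProductSpace ℝ F] {ν : F} (hν : ‖ν‖ = 1) (x : F) :
    (ℝ ∙ ν)ᗮ.reflection x = x - (2 * ⟪ν, x⟫) • ν := by
  rw [reflection_orthogonal_apply, reflection_singleton_apply, hν, RCLike.ofReal_one, one_pow,
    div_one, two_smul, two_mul, add_smul]
  abel

theorem marshak_even_matrix_neg_normal_general {m k : ℕ} (n : E3) (hn : ‖n‖ = 1) (ρ : ℝ)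
    (bo : E3 → Fin m → ℝ) (be : E3 → Fin k → ℝ)
    (hboodd : ∀ x ∈ Metric.sphere (0 : E3) 1, bo (-x) = -bo x)
    (hbeeven : ∀ x ∈ Metric.sphere (0 : E3) 1, be (-x) = be x)
    (He : E3 → Matrix (Fin m) (Fin k) ℝ)
    (hHe : ∀ ν : E3, ∀ i j, He ν i j = ∫ x in {x : S2 | ⟪ν, (x : E3)⟫ < 0},
      bo (x : E3) i * (be (x : E3) j - ρ * be ((x : E3) - (2 * ⟪ν, (x : E3)⟫) • ν) j) ∂σS) :
    He (-n) = -He n := by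
  have hantipodal : MeasurePreserving (fun x : S2 => -x) σS σS :=
    volume.measurePreserving_neg_toSphere
  have hhalf : (fun x : S2 => -x) ⁻¹' {x : S2 | ⟪-n, (x : E3)⟫ < 0} =
      {x : S2 | ⟪n, (x : E3)⟫ < 0} := by
    ext x
    simp
  ext i j
  rw [Matrix.neg_apply, hHe, hHe, ← hantipodal.setIntegral_preimage_emb
    (Homeomorph.neg S2).measurableEmbedding, hhalf, ← integral_neg]
  refine setIntegral_congr_fun (measurableSet_lt (by fun_prop) measurable_const) fun x _ => ?_
  have hx : (x : E3) ∈ sphere 0 1 := x.2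
  have hreflect : (x : E3) - (2 * ⟪n, (x : E3)⟫) • n ∈ sphere 0 1 := by
    simp [← Submodule.reflection_orthogonal_singleton_apply_of_norm_eq_one hn]
  have hreflect_neg :
      -(x : E3) - (2 * ⟪-n, -(x : E3)⟫) • -n = -((x : E3) - (2 * ⟪n, (x : E3)⟫) • n) := by
    rw [inner_neg_neg, smul_neg]
    abel
  rw [coe_neg_sphere, hreflect_neg, hboodd _ hx, hbeeven _ hx, hbeeven _ hreflect, Pi.neg_apply]
  ring

/-- Antisymmetry of the even Marshak boundary matrix: for `b_o : S² → ℝ^m` bounded measurable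
with odd components, `b_e : S² → ℝ^k` bounded measurable with even components, and
`H_e(ν)_{ij} = ∫_{⟨ν,x⟩<0} b_o(x)_i (b_e(x) − ρ b_e(r_ν(x)))_j dσ(x)` (with
`r_ν(x) = x − 2⟨ν,x⟩ν`), one has `H_e(−n) = −H_e(n)` for every unit vector `n`. -/
theorem marshak_even_matrix_neg_normal {m k : ℕ} (n : E3) (hn : ‖n‖ = 1) (ρ : ℝ)
    (bo : E3 → Fin m → ℝ) (be : E3 → Fin k → ℝ)
    (hbomeas : ∀ i, Measurable (fun x : S2 => bo (x : E3) i))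
    (hbobd : ∃ C : ℝ, ∀ x ∈ Metric.sphere (0 : E3) 1, ∀ i, |bo x i| ≤ C)
    (hboodd : ∀ x ∈ Metric.sphere (0 : E3) 1, bo (-x) = -bo x)
    (hbemeas : ∀ j, Measurable (fun x : S2 => be (x : E3) j))
    (hbebd : ∃ C : ℝ, ∀ x ∈ Metric.sphere (0 : E3) 1, ∀ j, |be x j| ≤ C)
    (hbeeven : ∀ x ∈ Metric.sphere (0 : E3) 1, be (-x) = be x)
    (He : E3 → Matrix (Fin m) (Fin k) ℝ)
    (hHe : ∀ ν : E3, ∀ i j, He ν i j = ∫ x in {x : S2 | ⟪ν, (x : E3)⟫ < 0},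
      bo (x : E3) i * (be (x : E3) j - ρ * be ((x : E3) - (2 * ⟪ν, (x : E3)⟫) • ν) j) ∂σS) :
    He (-n) = -He n :=
  marshak_even_matrix_neg_normal_general n hn ρ bo be hboodd hbeeven He hHe
end
end
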